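/- arXiv:1710.03596 — 2 statements merged into one kernel-verified Lean document; each statement's English description precedes it below -/
import Mathlib

section
/- Let b > 1, v > 1, ε > 0 with v − ε > 1, and (y_n) a sequence in [0,1]. Then the Hausdorff dimension of { x ∈ [v−ε, v+ε] : ‖x^n − y_n‖ < b^{−n} for infinitely many n } is at most (log(v+ε))/(log(b(v−ε))). -/
/-!
Write `c = v - ε`, `d = v + ε`. For `x ∈ [c, d]` the condition `‖x^n - y_n‖ < b^{-n}` means that
`x^n` lies within `b^{-n}` of `k + y_n` for one of at most `d^n + 2` integers `k`. Since
`x ↦ x^n` has slope at least `c^{n-1}` on `[c, d]`, each such condition cuts out a set of diameter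
at most `2c (bc)^{-n}`. For `s > log d / log (bc)` the series `∑ₙ (d^n + 2) (2c)^s (bc)^{-ns}`
converges, so by the Hausdorff–Cantelli lemma the limsup set has `s`-dimensional Hausdorff
measure zero.
-/

open Filter MeasureTheory Topology Set

/-- Distance to the nearest integer. -/
noncomputable def distNearestInt (x : ℝ) : ℝ := |x - round x|

open scoped ENNReal

theorem hausdorffMeasure_limsup_cofinite_eq_zero {X ι : Type*} [EMetricSpace X]
    [MeasurableSpace X] [BorelSpace X] [Countable ι] {d : ℝ} (hd : 0 < d) {A : ι → Set X}
    (h : ∑' i, Metric.ediam (A i) ^ d ≠ ∞) : μH[d] (limsup A cofinite) = 0 := by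
  set tail : Finset ι → ℝ≥0∞ := fun F => ∑' i : {i // i ∉ F}, Metric.ediam (A i) ^ d
  have htail : Tendsto tail atTop (𝓝 0) := ENNReal.tendsto_tsum_compl_atTop_zero h
  have hr : Tendsto (fun F => tail F ^ d⁻¹) atTop (𝓝 0) := by
    have := ((ENNReal.continuous_rpow_const (y := d⁻¹)).tendsto 0).comp htail
    rwa [ENNReal.zero_rpow_of_pos (inv_pos.2 hd)] at this
  have hdiam : ∀ F (i : {i // i ∉ F}), Metric.ediam (A i) ≤ tail F ^ d⁻¹ := fun F i => by
    rw [← ENNReal.rpow_rpow_inv hd.ne' (Metric.ediam (A i))]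
    gcongr
    exact ENNReal.le_tsum (f := fun i : {i // i ∉ F} => Metric.ediam (A i) ^ d) i
  have hcover : ∀ F : Finset ι, limsup A cofinite ⊆ ⋃ i : {i // i ∉ F}, A i := fun F x hx => by
    rw [mem_limsup_iff_frequently_mem, frequently_cofinite_iff_infinite] at hx
    obtain ⟨i, hxi, hiF⟩ := hx.exists_notMem_finset F
    exact mem_iUnion.2 ⟨⟨i, hiF⟩, hxi⟩
  refine nonpos_iff_eq_zero.1 ?_
  calc μH[d] (limsup A cofinite) ≤ liminf tail atTop :=
        Measure.hausdorffMeasure_le_liminf_tsum d _ _ hr (fun F (i : {i // i ∉ F}) => A i)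
          (Eventually.of_forall hdiam) (Eventually.of_forall hcover)
    _ = 0 := htail.liminf_eq

theorem sub_mul_pow_le_pow_succ_sub_pow_succ {w u : ℝ} (hw : 0 ≤ w) (hwu : w ≤ u) (n : ℕ) :
    (u - w) * w ^ n ≤ u ^ (n + 1) - w ^ (n + 1) := by
  have := pow_le_pow_left₀ hw hwu n
  rw [pow_succ', pow_succ']
  nlinarith

theorem abs_sub_mul_pow_lt_of_abs_pow_succ_sub_lt {c x x' z δ : ℝ} {n : ℕ} (hc : 0 ≤ c)
    (hx : c ≤ x) (hx' : c ≤ x') (h : |x ^ (n + 1) - z| < δ) (h' : |x' ^ (n + 1) - z| < δ) :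
    |x - x'| * c ^ n < 2 * δ := by
  wlog hle : x' ≤ x generalizing x x'
  · rw [abs_sub_comm]; exact this hx' hx h' h (le_of_not_ge hle)
  have hmono : (x - x') * c ^ n ≤ (x - x') * x' ^ n :=
    mul_le_mul_of_nonneg_left (pow_le_pow_left₀ hc hx' n) (sub_nonneg.2 hle)
  have hslope := sub_mul_pow_le_pow_succ_sub_pow_succ (hc.trans hx') hle n
  rw [abs_of_nonneg (sub_nonneg.2 hle)]
  linarith [abs_lt.1 h, abs_lt.1 h']

theorem ediam_Ici_inter_preimage_pow_succ_ball_le {c : ℝ} (hc : 0 < c) (n : ℕ) (z δ : ℝ) :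
    Metric.ediam (Ici c ∩ (· ^ (n + 1)) ⁻¹' Metric.ball z δ) ≤ ENNReal.ofReal (2 * δ / c ^ n) := by
  refine Metric.ediam_le_iff.2 fun x ⟨hx, hxz⟩ x' ⟨hx', hx'z⟩ => ?_
  rw [edist_dist, Real.dist_eq]
  exact ENNReal.ofReal_le_ofReal <| (le_div_iff₀ (pow_pos hc n)).2
    (abs_sub_mul_pow_lt_of_abs_pow_succ_sub_lt hc.le hx hx' hxz hx'z).le

theorem mem_Icc_floor_add_one_of_abs_sub_lt_one {w D z : ℝ} {k : ℤ} (hw : w ∈ Icc 1 D)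
    (hz : z ∈ Icc 0 1) (h : |w - (k + z)| < 1) : k ∈ Finset.Icc 0 (⌊D⌋ + 1) := by
  obtain ⟨h₁, h₂⟩ := abs_lt.1 h
  have hk₀ : (-1 : ℤ) < k := by
    have : (-1 : ℝ) < k := by linarith [hw.1, hz.2]
    exact_mod_cast this
  have hkD : k - 1 ≤ ⌊D⌋ := Int.le_floor.2 (by push_cast; linarith [hw.2, hz.1])
  rw [Finset.mem_Icc]
  omega

theorem tsum_ediam_Icc_inter_preimage_pow_succ_ball_rpow_le {c d z δ s : ℝ} (hc : 1 ≤ c)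
    (hd : 0 ≤ d) (hz : z ∈ Icc 0 1) (hδ₀ : 0 ≤ δ) (hδ : δ ≤ 1) (hs : 0 < s) (n : ℕ) :
    ∑' k : ℤ, Metric.ediam (Icc c d ∩ (· ^ (n + 1)) ⁻¹' Metric.ball (k + z) δ) ^ s ≤
      ENNReal.ofReal ((d ^ (n + 1) + 2) * (2 * δ / c ^ n) ^ s) := by
  let F := Finset.Icc (0 : ℤ) (⌊d ^ (n + 1)⌋ + 1)
  have hsupp : ∀ k ∉ F,
      Metric.ediam (Icc c d ∩ (· ^ (n + 1)) ⁻¹' Metric.ball (k + z) δ) ^ s = 0 := by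
    intro k hk
    suffices Icc c d ∩ (· ^ (n + 1)) ⁻¹' Metric.ball (k + z) δ = ∅ by
      rw [this, Metric.ediam_empty, ENNReal.zero_rpow_of_pos hs]
    refine eq_empty_of_forall_notMem fun x ⟨⟨hcx, hxd⟩, hxk⟩ => hk ?_
    have hx : 1 ≤ x := hc.trans hcx
    exact mem_Icc_floor_add_one_of_abs_sub_lt_one
      ⟨one_le_pow₀ hx, pow_le_pow_left₀ (zero_le_one.trans hx) hxd _⟩ hz (hxk.trans_le hδ)
  have hcard : (F.card : ℝ) ≤ d ^ (n + 1) + 2 := by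
    have hF : (F.card : ℤ) = ⌊d ^ (n + 1)⌋ + 2 := by
      have : 0 ≤ ⌊d ^ (n + 1)⌋ := Int.floor_nonneg.2 (by positivity)
      exact (Int.card_Icc_of_le 0 _ (by omega)).trans (by ring)
    have := Int.floor_le (d ^ (n + 1))
    rw [← Int.cast_natCast, hF]; push_cast; linarith
  have hdiam : ∀ k : ℤ,
      Metric.ediam (Icc c d ∩ (· ^ (n + 1)) ⁻¹' Metric.ball (k + z) δ) ^ s ≤
        ENNReal.ofReal ((2 * δ / c ^ n) ^ s) := fun k => by
    rw [← ENNReal.ofReal_rpow_of_nonneg (by positivity) hs.le]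
    gcongr
    exact (Metric.ediam_mono (inter_subset_inter_left _ Icc_subset_Ici_self)).trans
      (ediam_Ici_inter_preimage_pow_succ_ball_le (by linarith) n _ δ)
  rw [tsum_eq_sum hsupp]
  calc _ ≤ F.card • ENNReal.ofReal ((2 * δ / c ^ n) ^ s) :=
        Finset.sum_le_card_nsmul _ _ _ fun k _ => hdiam k
    _ ≤ _ := by
      rw [nsmul_eq_mul, ← ENNReal.ofReal_natCast, ← ENNReal.ofReal_mul (Nat.cast_nonneg _)]
      gcongr

/-- Indexed by `n + 1` rather than `n`: at exponent `0` the condition does not shrink `[c, d]`. -/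
def powNearIntCover (c d b : ℝ) (y : ℕ → ℝ) (p : ℕ × ℤ) : Set ℝ :=
  Icc c d ∩ (· ^ (p.1 + 1)) ⁻¹' Metric.ball (p.2 + y (p.1 + 1)) (b ^ (p.1 + 1))⁻¹

theorem tsum_ediam_powNearIntCover_rpow_ne_top {b c d s : ℝ} {y : ℕ → ℝ} (hb : 1 ≤ b)
    (hc : 1 ≤ c) (hd : 1 ≤ d) (hy : ∀ n, y n ∈ Icc 0 1) (hs : 0 < s) (hds : d < (b * c) ^ s) :
    ∑' p, Metric.ediam (powNearIntCover c d b y p) ^ s ≠ ∞ := by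
  have hbc : 0 < (b * c) ^ s := by positivity
  set r := d / (b * c) ^ s
  have hr₀ : 0 ≤ r := by positivity
  have hr₁ : r < 1 := (div_lt_one hbc).2 hds
  have hterm (n : ℕ) : ∑' k : ℤ, Metric.ediam (powNearIntCover c d b y (n, k)) ^ s ≤
      ENNReal.ofReal (3 * (2 * c) ^ s * r ^ (n + 1)) := by
    have hlevel := tsum_ediam_Icc_inter_preimage_pow_succ_ball_rpow_le (d := d) hc (by linarith)
      (hy (n + 1)) (inv_nonneg.2 (pow_nonneg (by linarith) (n + 1)))
      (inv_le_one_of_one_le₀ (one_le_pow₀ hb)) hs n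
    refine hlevel.trans (ENNReal.ofReal_le_ofReal ?_)
    have hδ : 2 * (b ^ (n + 1))⁻¹ / c ^ n = 2 * c / (b * c) ^ (n + 1) := by
      field_simp; ring
    have hd' : d ^ (n + 1) + 2 ≤ 3 * d ^ (n + 1) := by linarith [one_le_pow₀ (n := n + 1) hd]
    calc (d ^ (n + 1) + 2) * (2 * (b ^ (n + 1))⁻¹ / c ^ n) ^ s
        ≤ 3 * d ^ (n + 1) * ((2 * c) ^ s / ((b * c) ^ s) ^ (n + 1)) := by
          rw [hδ, Real.div_rpow (by positivity) (by positivity), Real.rpow_pow_comm (by positivity)]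
          gcongr
      _ = 3 * (2 * c) ^ s * r ^ (n + 1) := by rw [div_pow]; ring
  rw [ENNReal.tsum_prod']
  refine ne_top_of_le_ne_top ?_ (ENNReal.tsum_le_tsum hterm)
  rw [← ENNReal.ofReal_tsum_of_nonneg (fun n => by positivity)
    (((summable_nat_add_iff 1).2 (summable_geometric_of_lt_one hr₀ hr₁)).mul_left _)]
  exact ENNReal.ofReal_ne_top

theorem setOf_frequently_distNearestInt_lt_subset_limsup_powNearIntCover (c d b : ℝ)
    (y : ℕ → ℝ) :
    {x : ℝ | x ∈ Icc c d ∧ ∃ᶠ n : ℕ in atTop, distNearestInt (x ^ n - y n) < (b ^ n)⁻¹} ⊆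
      limsup (powNearIntCover c d b y) cofinite := by
  rintro x ⟨hx, hfreq⟩
  rw [← map_add_atTop_eq_nat 1, frequently_map, ← Nat.cofinite_eq_atTop] at hfreq
  have hinj : (fun n => (n, round (x ^ (n + 1) - y (n + 1)))).Injective :=
    fun m n h => congrArg Prod.fst h
  rw [mem_limsup_iff_frequently_mem]
  refine hinj.tendsto_cofinite.frequently (hfreq.mono fun n hn => ⟨hx, ?_⟩)
  rw [mem_preimage, Metric.mem_ball, Real.dist_eq]
  convert hn using 2
  unfold distNearestInt
  ring_nf

theorem stmt3_general (b : ℝ) (hb : 1 < b) (v ε : ℝ) (hε : 0 < ε) (hvε : 1 < v - ε)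
    (y : ℕ → ℝ) (hy : ∀ n, y n ∈ Set.Icc (0:ℝ) 1) :
    dimH {x : ℝ | x ∈ Set.Icc (v - ε) (v + ε) ∧
        ∃ᶠ n : ℕ in atTop, distNearestInt (x ^ n - y n) < (b ^ n)⁻¹} ≤
      ENNReal.ofReal (Real.log (v + ε) / Real.log (b * (v - ε))) := by
  refine dimH_le fun s hs => le_of_not_gt fun hlt => ?_
  have hbc : 1 < b * (v - ε) := one_lt_mul_of_le_of_lt hb.le hvε
  have hd : 1 < v + ε := by linarith
  have hB : 0 < Real.log (v + ε) / Real.log (b * (v - ε)) :=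
    div_pos (Real.log_pos hd) (Real.log_pos hbc)
  have hsB := (ENNReal.ofReal_lt_coe_iff hB.le).1 hlt
  have hds : v + ε < (b * (v - ε)) ^ (s : ℝ) := (Real.lt_rpow_iff_log_lt (by linarith)
    (by linarith)).2 ((div_lt_iff₀ (Real.log_pos hbc)).1 hsB)
  have hnull := measure_mono_null
    (setOf_frequently_distNearestInt_lt_subset_limsup_powNearIntCover _ _ b y)
    (hausdorffMeasure_limsup_cofinite_eq_zero (hB.trans hsB)
      (tsum_ediam_powNearIntCover_rpow_ne_top hb.le hvε.le hd.le hy (hB.trans hsB) hds))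
  exact ENNReal.top_ne_zero (hs.symm.trans hnull)

theorem stmt3 (b : ℝ) (hb : 1 < b) (v ε : ℝ) (hv : 1 < v) (hε : 0 < ε) (hvε : 1 < v - ε)
    (y : ℕ → ℝ) (hy : ∀ n, y n ∈ Set.Icc (0:ℝ) 1) :
    dimH {x : ℝ | x ∈ Set.Icc (v - ε) (v + ε) ∧
        ∃ᶠ n : ℕ in atTop, distNearestInt (x ^ n - y n) < (b ^ n)⁻¹} ≤
      ENNReal.ofReal (Real.log (v + ε) / Real.log (b * (v - ε))) :=
  stmt3_general b hb v ε hε hvε y hy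
end

section
/- For any ε > 0 and any sequence of real numbers (y_n)_{n≥1}, the set { x > 1 : ‖x^n − y_n‖ < ε for all n ≥ 1 } has Hausdorff dimension 1. -/
open Filter MeasureTheory Topology Set

open scoped NNReal ENNReal

/-!
Fix `0 < e ≤ 1/2` with `e < ε`, a base `N ≥ 2` and `T = (N + 1) / e`. A digit string
`σ : ℕ → Fin N` determines intervals `[lo n, hi n]`, `n ≥ 1`, on which `x ^ n - y n` runs through
`[m n, m n + e]` for the integer `m (n + 1) = ⌈lo n ^ (n + 1) - y (n + 1)⌉ + σ n`. Since
`hi n ^ (n + 1) ≥ lo n ^ (n + 1) + e T` while `hi (n + 1) ^ (n + 1) ≤ lo n ^ (n + 1) + N + e`, the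
intervals are nested, and their common point `limit σ` lies in the set.

If two strings first differ at index `k`, the `(k + 1)`-st powers of their points differ by at
least `1 - e`, so the points are at least `(2 (k + 1) (2T) ^ k)⁻¹` apart, while the base-`N` numbers
`0.σ₀σ₁…` differ by at most `N ^ (-k)`. Once `2 (2T) ^ r ≤ N` the base-`N` number is therefore an
`r`-Hölder function of the point, and since these numbers fill `[0, 1]`, the set has Hausdorff
dimension at least `r`. Any `r < 1` is admissible for large `N`.
-/

lemma distNearestInt_le_of_mem_Icc {t e : ℝ} {m : ℤ} (h : t - m ∈ Icc 0 e) :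
    distNearestInt t ≤ e :=
  (round_le t m).trans (abs_le.2 ⟨by linarith [h.1, h.2, h.1.trans h.2], h.2⟩)

lemma dimH_range_le_of_edist_le {α X Y : Type*} [EMetricSpace X] [EMetricSpace Y] {f : α → X}
    {g : α → Y} {C r : ℝ≥0} (hr : 0 < r)
    (h : ∀ a b, edist (g a) (g b) ≤ C * edist (f a) (f b) ^ (r : ℝ)) :
    dimH (range g) ≤ dimH (range f) / r := by
  rcases isEmpty_or_nonempty α with hα | hα
  · simp [range_eq_empty]
  set φ := g ∘ Function.invFun f
  have hφ (a : α) : φ (f a) = g a := edist_le_zero.1 <| by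
    simpa [φ, Function.invFun_eq ⟨a, rfl⟩, ENNReal.zero_rpow_of_pos (NNReal.coe_pos.2 hr)] using
      h (Function.invFun f (f a)) a
  have hφf : φ '' range f = range g := by rw [← range_comp]; exact congrArg range (funext hφ)
  have hol : HolderOnWith C r φ (range f) := by
    rintro _ ⟨a, rfl⟩ _ ⟨b, rfl⟩
    rw [hφ, hφ]
    exact h a b
  exact hφf ▸ hol.dimH_image_le hr

lemma inv_pow_le_two_mul_rpow {N : ℕ} {W r : ℝ} (hW : 0 < W) (hr1 : r ≤ 1)
    (hWN : 2 * W ^ r ≤ N) (k : ℕ) : ((N : ℝ) ^ k)⁻¹ ≤ 2 * ((2 * (k + 1) * W ^ k)⁻¹) ^ r := by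
  have hk : (k : ℝ) + 1 ≤ 2 ^ k := by exact_mod_cast Nat.lt_two_pow_self
  have hden : (2 * (k + 1) * W ^ k) ^ r ≤ 2 * (N : ℝ) ^ k :=
    calc (2 * (k + 1) * W ^ k) ^ r = (2 * (k + 1)) ^ r * (W ^ r) ^ k := by
          rw [Real.mul_rpow (by positivity) (by positivity), Real.rpow_pow_comm hW.le]
      _ ≤ (2 * 2 ^ k) * (N / 2 : ℝ) ^ k := by
          gcongr
          · exact (Real.rpow_le_self_of_one_le (by linarith) hr1).trans (by linarith)
          · linarith
      _ = 2 * (N : ℝ) ^ k := by rw [mul_assoc, ← mul_pow]; ring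
  rw [Real.inv_rpow (by positivity), ← div_eq_mul_inv, le_div_iff₀ (by positivity)]
  calc ((N : ℝ) ^ k)⁻¹ * (2 * (k + 1) * W ^ k) ^ r ≤ ((N : ℝ) ^ k)⁻¹ * (2 * (N : ℝ) ^ k) := by
        gcongr
    _ = 2 := by
        have : (0 : ℝ) < N := by linarith [Real.rpow_pos_of_pos hW r]
        field_simp

lemma exists_nat_mul_rpow_le {r : ℝ} (hr : r < 1) (c : ℝ) :
    ∃ N : ℕ, 1 < N ∧ c * (N : ℝ) ^ r ≤ N := by
  have hlim : Tendsto (fun n : ℕ => (n : ℝ) ^ (1 - r)) atTop atTop :=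
    (tendsto_rpow_atTop (by linarith)).comp tendsto_natCast_atTop_atTop
  obtain ⟨N, hc, hN⟩ := ((hlim.eventually_ge_atTop c).and (eventually_gt_atTop 1)).exists
  refine ⟨N, hN, ?_⟩
  have hN0 : (0 : ℝ) < N := by exact_mod_cast zero_lt_one.trans hN
  calc c * (N : ℝ) ^ r ≤ (N : ℝ) ^ (1 - r) * (N : ℝ) ^ r := by gcongr
    _ = N := by rw [← Real.rpow_add hN0, sub_add_cancel, Real.rpow_one]

namespace NearIntPowers

variable (y : ℕ → ℝ) (e T : ℝ) {N : ℕ} (σ : ℕ → Fin N)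

noncomputable def lo : ℕ → ℝ
  | 0 => T
  | n + 1 => ((⌈lo n ^ (n + 1) - y (n + 1)⌉ + σ n : ℤ) + y (n + 1)) ^ ((↑(n + 1) : ℝ)⁻¹)

noncomputable def hi (n : ℕ) : ℝ := (lo y T σ n ^ n + e) ^ ((n : ℝ)⁻¹)

noncomputable def limit : ℝ := ⨆ n, lo y T σ n

variable {y e T σ}

lemma pow_le_ceil_add (x : ℝ) (n : ℕ) (j : ℕ) :
    x ^ (n + 1) ≤ ((⌈x ^ (n + 1) - y (n + 1)⌉ + j : ℤ) : ℝ) + y (n + 1) := by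
  push_cast
  linarith [Int.le_ceil (x ^ (n + 1) - y (n + 1)), (Nat.cast_nonneg j : (0 : ℝ) ≤ j)]

lemma le_lo (hT : 0 ≤ T) (n : ℕ) : T ≤ lo y T σ n := by
  induction n with
  | zero => rfl
  | succ n ih =>
    calc T = (T ^ (n + 1)) ^ ((↑(n + 1) : ℝ)⁻¹) :=
          (Real.pow_rpow_inv_natCast hT n.succ_ne_zero).symm
      _ ≤ lo y T σ (n + 1) := by
        refine Real.rpow_le_rpow (by positivity) ?_ (by positivity)
        exact (pow_le_pow_left₀ hT ih _).trans (pow_le_ceil_add _ n _)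

lemma lo_nonneg (hT : 0 ≤ T) (n : ℕ) : 0 ≤ lo y T σ n := hT.trans (le_lo hT n)

lemma lo_succ_pow (hT : 0 ≤ T) (n : ℕ) :
    lo y T σ (n + 1) ^ (n + 1) =
      ((⌈lo y T σ n ^ (n + 1) - y (n + 1)⌉ + σ n : ℤ) : ℝ) + y (n + 1) :=
  Real.rpow_inv_natCast_pow ((pow_nonneg (lo_nonneg hT n) _).trans (pow_le_ceil_add _ n _))
    n.succ_ne_zero

lemma monotone_lo (hT : 0 ≤ T) : Monotone (lo y T σ) :=
  monotone_nat_of_le_succ fun n => le_of_pow_le_pow_left₀ n.succ_ne_zero (lo_nonneg hT _) <| by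
    rw [lo_succ_pow hT]
    exact pow_le_ceil_add _ n _

lemma hi_pow (hT : 0 ≤ T) (he : 0 ≤ e) {n : ℕ} (hn : n ≠ 0) :
    hi y e T σ n ^ n = lo y T σ n ^ n + e :=
  Real.rpow_inv_natCast_pow (by have := lo_nonneg (σ := σ) (y := y) hT n; positivity) hn

lemma hi_nonneg (hT : 0 ≤ T) (he : 0 ≤ e) (n : ℕ) : 0 ≤ hi y e T σ n :=
  Real.rpow_nonneg (by have := lo_nonneg (σ := σ) (y := y) hT n; positivity) _

lemma lo_le_hi_self (hT : 0 ≤ T) (he : 0 ≤ e) {n : ℕ} (hn : n ≠ 0) : lo y T σ n ≤ hi y e T σ n :=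
  le_of_pow_le_pow_left₀ hn (hi_nonneg hT he n) (by rw [hi_pow hT he hn]; linarith)

lemma hi_succ_le (hT : 0 ≤ T) (he : 0 ≤ e) (hNT : N + e ≤ e * T) {n : ℕ} (hn : n ≠ 0) :
    hi y e T σ (n + 1) ≤ hi y e T σ n := by
  refine le_of_pow_le_pow_left₀ n.succ_ne_zero (hi_nonneg hT he n) ?_
  have hσ : (σ n : ℝ) + 1 ≤ N := by exact_mod_cast (σ n).isLt
  have hceil := Int.ceil_lt_add_one (lo y T σ n ^ (n + 1) - y (n + 1))
  have hTlo : e * T ≤ e * lo y T σ n := mul_le_mul_of_nonneg_left (le_lo hT n) he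
  calc hi y e T σ (n + 1) ^ (n + 1) = lo y T σ (n + 1) ^ (n + 1) + e := hi_pow hT he n.succ_ne_zero
    _ ≤ lo y T σ n * (lo y T σ n ^ n + e) := by
      rw [lo_succ_pow hT]
      push_cast
      linarith [pow_succ (lo y T σ n) n]
    _ ≤ hi y e T σ n * hi y e T σ n ^ n := by
      rw [hi_pow hT he hn]
      have := lo_nonneg (σ := σ) (y := y) hT n
      gcongr
      exact lo_le_hi_self hT he hn
    _ = hi y e T σ n ^ (n + 1) := (pow_succ' _ _).symm

lemma hi_le_hi (hT : 0 ≤ T) (he : 0 ≤ e) (hNT : N + e ≤ e * T) {m n : ℕ} (hm : m ≠ 0)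
    (hmn : m ≤ n) : hi y e T σ n ≤ hi y e T σ m := by
  induction n, hmn using Nat.le_induction with
  | base => rfl
  | succ n hmn ih => exact (hi_succ_le hT he hNT (by omega)).trans ih

lemma lo_le_hi (hT : 0 ≤ T) (he : 0 ≤ e) (hNT : N + e ≤ e * T) (m : ℕ) {n : ℕ}
    (hn : n ≠ 0) : lo y T σ m ≤ hi y e T σ n :=
  calc lo y T σ m ≤ lo y T σ (max m n) := monotone_lo hT (le_max_left m n)
    _ ≤ hi y e T σ (max m n) := lo_le_hi_self hT he (by omega)
    _ ≤ hi y e T σ n := hi_le_hi hT he hNT hn (le_max_right m n)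

lemma lo_le_limit (hT : 0 ≤ T) (he : 0 ≤ e) (hNT : N + e ≤ e * T) (n : ℕ) :
    lo y T σ n ≤ limit y T σ :=
  le_ciSup ⟨hi y e T σ 1, forall_mem_range.2 fun m => lo_le_hi hT he hNT m one_ne_zero⟩ n

lemma limit_le_hi (hT : 0 ≤ T) (he : 0 ≤ e) (hNT : N + e ≤ e * T) {n : ℕ} (hn : n ≠ 0) :
    limit y T σ ≤ hi y e T σ n :=
  ciSup_le fun m => lo_le_hi hT he hNT m hn

lemma limit_le_two_mul (hT : 0 ≤ T) (he : 0 ≤ e) (he1 : e ≤ 1) (hNT : N + e ≤ e * T) :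
    limit y T σ ≤ 2 * T := by
  have h1 := hi_pow (σ := σ) (y := y) hT he one_ne_zero
  have h0 := lo_succ_pow (σ := σ) (y := y) hT 0
  have hσ : (σ 0 : ℝ) + 1 ≤ N := by exact_mod_cast (σ 0).isLt
  have hceil := Int.ceil_lt_add_one (lo y T σ 0 ^ 1 - y 1)
  simp only [pow_one, zero_add] at h1 h0 hceil
  push_cast at h0
  have : lo y T σ 0 = T := rfl
  nlinarith [limit_le_hi (σ := σ) (y := y) hT he hNT one_ne_zero]

lemma limit_pow_sub_mem (hT : 0 ≤ T) (he : 0 ≤ e) (hNT : N + e ≤ e * T) (n : ℕ) :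
    limit y T σ ^ (n + 1) - y (n + 1) - (⌈lo y T σ n ^ (n + 1) - y (n + 1)⌉ + σ n : ℤ) ∈
      Icc 0 e := by
  have hlo := pow_le_pow_left₀ (lo_nonneg hT _) (lo_le_limit (σ := σ) (y := y) hT he hNT (n + 1))
    (n + 1)
  have hhi := pow_le_pow_left₀ (lo_nonneg hT _ |>.trans (lo_le_limit (σ := σ) (y := y) hT he hNT 0))
    (limit_le_hi (σ := σ) (y := y) hT he hNT n.succ_ne_zero) (n + 1)
  rw [hi_pow hT he n.succ_ne_zero, lo_succ_pow hT] at hhi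
  rw [lo_succ_pow hT] at hlo
  constructor <;> linarith

lemma limit_mem (hT : 1 < T) (he : 0 ≤ e) (hNT : N + e ≤ e * T) {ε : ℝ} (heε : e < ε) :
    limit y T σ ∈ {x : ℝ | 1 < x ∧ ∀ n : ℕ, 1 ≤ n → distNearestInt (x ^ n - y n) < ε} := by
  have hT0 : 0 ≤ T := zero_le_one.trans hT.le
  refine ⟨hT.trans_le (lo_le_limit hT0 he hNT 0), fun n hn => ?_⟩
  obtain ⟨n, rfl⟩ := Nat.exists_eq_add_of_le' hn
  exact (distNearestInt_le_of_mem_Icc (limit_pow_sub_mem hT0 he hNT n)).trans_lt heε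

lemma lo_eq_of_forall_lt_eq {σ' : ℕ → Fin N} {k : ℕ} (h : ∀ i < k, σ i = σ' i) :
    lo y T σ k = lo y T σ' k := by
  induction k with
  | zero => rfl
  | succ k ih => simp only [lo, ih fun i hi => h i (by omega), h k k.lt_succ_self]

lemma one_sub_le_abs_limit_pow_sub (hT : 0 ≤ T) (he : 0 ≤ e) (hNT : N + e ≤ e * T)
    {σ' : ℕ → Fin N} {k : ℕ} (h : ∀ i < k, σ i = σ' i) (hk : σ k ≠ σ' k) :
    1 - e ≤ |limit y T σ ^ (k + 1) - limit y T σ' ^ (k + 1)| := by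
  have hδ := limit_pow_sub_mem (σ := σ) (y := y) hT he hNT k
  have hδ' := limit_pow_sub_mem (σ := σ') (y := y) hT he hNT k
  rw [lo_eq_of_forall_lt_eq h] at hδ
  push_cast at hδ hδ'
  rcases Fin.lt_or_lt_of_ne hk with hlt | hlt
  · have : (σ k : ℝ) + 1 ≤ σ' k := by exact_mod_cast hlt
    rw [abs_sub_comm]
    exact le_abs.2 (Or.inl (by linarith [hδ.1, hδ.2, hδ'.1, hδ'.2]))
  · have : (σ' k : ℝ) + 1 ≤ σ k := by exact_mod_cast hlt
    exact le_abs.2 (Or.inl (by linarith [hδ.1, hδ.2, hδ'.1, hδ'.2]))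

lemma inv_two_mul_le_abs_limit_sub (hT : 0 < T) (he : 0 ≤ e) (he1 : e ≤ 1 / 2)
    (hNT : N + e ≤ e * T) {σ' : ℕ → Fin N} {k : ℕ} (h : ∀ i < k, σ i = σ' i) (hk : σ k ≠ σ' k) :
    (2 * (k + 1) * (2 * T) ^ k)⁻¹ ≤ |limit y T σ - limit y T σ'| := by
  have hle : ∀ τ : ℕ → Fin N, |limit y T τ| ≤ 2 * T := fun τ => by
    rw [abs_of_nonneg (hT.le.trans (lo_le_limit (σ := τ) (y := y) hT.le he hNT 0))]
    exact limit_le_two_mul hT.le he (he1.trans (by norm_num)) hNT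
  have hpow : |limit y T σ ^ (k + 1) - limit y T σ' ^ (k + 1)| ≤
      |limit y T σ - limit y T σ'| * (k + 1) * (2 * T) ^ k := by
    refine (abs_pow_sub_pow_le _ _ _).trans ?_
    push_cast
    gcongr
    exact max_le (hle σ) (hle σ')
  have hgap := one_sub_le_abs_limit_pow_sub (y := y) hT.le he hNT h hk
  rw [inv_le_iff_one_le_mul₀' (by positivity)]
  nlinarith

lemma dist_ofDigits_le (hT : 0 < T) (he : 0 ≤ e) (he1 : e ≤ 1 / 2) (hNT : N + e ≤ e * T)
    {r : ℝ} (hr0 : 0 ≤ r) (hr1 : r ≤ 1) (hTN : 2 * (2 * T) ^ r ≤ N) (σ σ' : ℕ → Fin N) :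
    dist (Real.ofDigits σ) (Real.ofDigits σ') ≤ 2 * dist (limit y T σ) (limit y T σ') ^ r := by
  rcases eq_or_ne σ σ' with rfl | hne
  · rw [dist_self]
    positivity
  set k := PiNat.firstDiff σ σ'
  have hagree : ∀ i < k, σ i = σ' i := fun i hi => PiNat.apply_eq_of_lt_firstDiff hi
  calc dist (Real.ofDigits σ) (Real.ofDigits σ') ≤ ((N : ℝ) ^ k)⁻¹ :=
        Real.abs_ofDigits_sub_ofDigits_le hagree
    _ ≤ 2 * ((2 * (k + 1) * (2 * T) ^ k)⁻¹) ^ r :=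
        inv_pow_le_two_mul_rpow (by positivity) hr1 hTN k
    _ ≤ 2 * dist (limit y T σ) (limit y T σ') ^ r := by
        gcongr
        exact inv_two_mul_le_abs_limit_sub hT he he1 hNT hagree (PiNat.apply_firstDiff_ne hne)

lemma exists_admissible_params {e r : ℝ} (he0 : 0 < e) (he1 : e ≤ 1) (hr0 : 0 ≤ r) (hr1 : r < 1) :
    ∃ (N : ℕ) (T : ℝ), 1 < N ∧ 1 < T ∧ N + e ≤ e * T ∧ 2 * (2 * T) ^ r ≤ N := by
  obtain ⟨N, hN1, hN⟩ := exists_nat_mul_rpow_le hr1 (2 * (4 / e) ^ r)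
  have hN0 : (1 : ℝ) ≤ N := by exact_mod_cast hN1.le
  refine ⟨N, (N + 1) / e, hN1, ?_, ?_, ?_⟩
  · rw [lt_div_iff₀ he0]
    nlinarith
  · rw [mul_div_cancel₀ _ he0.ne']
    linarith
  · have h2T : 2 * ((N + 1) / e) ≤ 4 / e * N := by
      rw [div_mul_eq_mul_div, ← mul_div_assoc, div_le_div_iff_of_pos_right he0]
      linarith
    calc 2 * (2 * ((N + 1) / e)) ^ r ≤ 2 * (4 / e * N) ^ r := by gcongr
      _ = 2 * (4 / e) ^ r * (N : ℝ) ^ r := by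
          rw [Real.mul_rpow (by positivity) (by positivity), mul_assoc]
      _ ≤ N := hN

lemma coe_le_dimH_range_limit (hN1 : 1 < N) (hT : 0 < T) (he : 0 ≤ e) (he1 : e ≤ 1 / 2)
    (hNT : N + e ≤ e * T) {r : ℝ≥0} (hr0 : 0 < r) (hr1 : r ≤ 1)
    (hTN : 2 * (2 * T) ^ (r : ℝ) ≤ N) :
    (r : ℝ≥0∞) ≤ dimH (range (limit (N := N) y T)) := by
  have hholder : dimH (range (Real.ofDigits (b := N))) ≤ dimH (range (limit (N := N) y T)) / r := by
    refine dimH_range_le_of_edist_le (C := 2) hr0 fun σ σ' => ?_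
    rw [edist_dist, edist_dist, ENNReal.ofReal_rpow_of_nonneg dist_nonneg r.coe_nonneg]
    refine (ENNReal.ofReal_le_ofReal (dist_ofDigits_le (y := y) hT he he1 hNT
      r.coe_nonneg (NNReal.coe_le_one.2 hr1) hTN σ σ')).trans_eq ?_
    rw [ENNReal.ofReal_mul zero_le_two]
    norm_num
  have hone : 1 ≤ dimH (range (Real.ofDigits (b := N))) := by
    have hIcc : dimH (Icc (0 : ℝ) 1) = 1 := by
      rw [Real.dimH_of_nonempty_interior (by simp [interior_Icc])]
      simp
    rw [← hIcc, ← image_univ]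
    exact dimH_mono (Real.ofDigits_SurjOn hN1)
  rw [ENNReal.le_div_iff_mul_le (Or.inl (by exact_mod_cast hr0.ne')) (Or.inl ENNReal.coe_ne_top)]
    at hholder
  simpa using mul_le_mul_left hone (r : ℝ≥0∞) |>.trans hholder

lemma coe_le_dimH_setOf {ε : ℝ} (hε : 0 < ε) (y : ℕ → ℝ) {r : ℝ≥0} (hr0 : 0 < r)
    (hr1 : r < 1) :
    (r : ℝ≥0∞) ≤ dimH {x : ℝ | 1 < x ∧ ∀ n : ℕ, 1 ≤ n → distNearestInt (x ^ n - y n) < ε} := by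
  set e := min (ε / 2) (1 / 2)
  have he0 : 0 < e := lt_min (by positivity) (by norm_num)
  have he1 : e ≤ 1 / 2 := min_le_right _ _
  have heε : e < ε := (min_le_left _ _).trans_lt (by linarith)
  obtain ⟨N, T, hN1, hT1, hNT, hTN⟩ :=
    exists_admissible_params he0 (he1.trans (by norm_num)) r.coe_nonneg hr1
  refine (coe_le_dimH_range_limit (y := y) hN1 (by linarith) he0.le he1 hNT hr0 hr1.le hTN).trans
    (dimH_mono ?_)
  rintro _ ⟨σ, rfl⟩
  exact limit_mem hT1 he0.le hNT heε

end NearIntPowers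

theorem stmt15 (ε : ℝ) (hε : 0 < ε) (y : ℕ → ℝ) :
    dimH {x : ℝ | 1 < x ∧ ∀ n : ℕ, 1 ≤ n → distNearestInt (x ^ n - y n) < ε} = 1 := by
  refine le_antisymm ((dimH_mono (subset_univ _)).trans Real.dimH_univ.le) ?_
  refine ENNReal.le_of_forall_pos_nnreal_lt fun r hr0 hr1 => ?_
  exact NearIntPowers.coe_le_dimH_setOf hε y hr0 (ENNReal.coe_lt_one_iff.1 hr1)
end
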